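/- arXiv:2309.07329 — 5 statements merged into one kernel-verified Lean document; each statement's English description precedes it below -/
import Mathlib

section
/- For all ρ, ρ̄ > 0 and γ > 1, the inequality |ρ^{γ-1} - ρ̄^{γ-1}| · |ρ - ρ̄| ≤ ((ρ^γ - ρ̄^γ)(ρ - ρ̄))^{γ/(γ+1)} holds. -/
/-!
Assume `ρ̄ ≤ ρ` and put `d = ρ - ρ̄`, `D = ρ^γ - ρ̄^γ`. Superadditivity of `t ↦ t^γ` gives
`d^γ ≤ D`, and subadditivity of `t ↦ t^((γ-1)/γ)` applied to `ρ^γ = ρ̄^γ + D` gives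
`ρ^(γ-1) - ρ̄^(γ-1) ≤ D^((γ-1)/γ)`. It remains to check `D^((γ-1)/γ) d ≤ (D d)^(γ/(γ+1))`,
which after splitting `d = d^(1/(γ+1)) d^(γ/(γ+1))` is `d^γ ≤ D` raised to the power `1/(γ(γ+1))`.
-/

namespace Real

theorem rpow_sub_rpow_le_rpow_sub {a b p : ℝ} (hb : 0 ≤ b) (hba : b ≤ a) (hp : 0 ≤ p)
    (hp1 : p ≤ 1) : a ^ p - b ^ p ≤ (a - b) ^ p := by
  have h := NNReal.coe_le_coe.2
    (NNReal.rpow_add_le_add_rpow (a - b).toNNReal b.toNNReal hp hp1)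
  push_cast at h
  rw [coe_toNNReal _ (sub_nonneg.2 hba), coe_toNNReal _ hb, sub_add_cancel] at h
  linarith

theorem rpow_sub_le_rpow_sub_rpow {a b p : ℝ} (hb : 0 ≤ b) (hba : b ≤ a) (hp : 1 ≤ p) :
    (a - b) ^ p ≤ a ^ p - b ^ p := by
  have h := NNReal.coe_le_coe.2 (NNReal.add_rpow_le_rpow_add (a - b).toNNReal b.toNNReal hp)
  push_cast at h
  rw [coe_toNNReal _ (sub_nonneg.2 hba), coe_toNNReal _ hb, sub_add_cancel] at h
  linarith

theorem rpow_div_mul_le_mul_rpow {d D γ : ℝ} (hd : 0 ≤ d) (hγ : 0 < γ) (hdD : d ^ γ ≤ D) :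
    D ^ ((γ - 1) / γ) * d ≤ (D * d) ^ (γ / (γ + 1)) := by
  have hD : 0 ≤ D := (rpow_nonneg hd γ).trans hdD
  have hγ1 : 0 < γ + 1 := by linarith
  have hexp : (γ - 1) / γ + 1 / (γ * (γ + 1)) = γ / (γ + 1) := by field_simp; ring
  have hd_root : d ^ (1 / (γ + 1)) ≤ D ^ (1 / (γ * (γ + 1))) := by
    calc d ^ (1 / (γ + 1)) = (d ^ γ) ^ (1 / (γ * (γ + 1))) := by
          rw [← rpow_mul hd, show γ * (1 / (γ * (γ + 1))) = 1 / (γ + 1) by field_simp]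
      _ ≤ D ^ (1 / (γ * (γ + 1))) := by gcongr
  calc D ^ ((γ - 1) / γ) * d
      = D ^ ((γ - 1) / γ) * d ^ (1 / (γ + 1)) * d ^ (γ / (γ + 1)) := by
        rw [mul_assoc, ← rpow_add' hd (by rw [← add_div]; positivity), ← add_div, add_comm,
          div_self hγ1.ne', rpow_one]
    _ ≤ D ^ ((γ - 1) / γ) * D ^ (1 / (γ * (γ + 1))) * d ^ (γ / (γ + 1)) := by gcongr
    _ = (D * d) ^ (γ / (γ + 1)) := by
        rw [← rpow_add' hD (by rw [hexp]; positivity), hexp, mul_rpow hD hd]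

end Real

open Real in
theorem rpow_sub_mul_sub_le_of_le {a b γ : ℝ} (hb : 0 ≤ b) (hba : b ≤ a) (hγ : 1 ≤ γ) :
    (a ^ (γ - 1) - b ^ (γ - 1)) * (a - b) ≤ ((a ^ γ - b ^ γ) * (a - b)) ^ (γ / (γ + 1)) := by
  have hγ0 : 0 < γ := by linarith
  have ha : 0 ≤ a := hb.trans hba
  have hθ : (γ - 1) / γ ≤ 1 := by rw [div_le_one hγ0]; linarith
  have hpow_root : ∀ x : ℝ, 0 ≤ x → x ^ (γ - 1) = (x ^ γ) ^ ((γ - 1) / γ) := fun x hx => by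
    rw [← rpow_mul hx, mul_div_cancel₀ _ hγ0.ne']
  have hdiff : a ^ (γ - 1) - b ^ (γ - 1) ≤ (a ^ γ - b ^ γ) ^ ((γ - 1) / γ) := by
    rw [hpow_root a ha, hpow_root b hb]
    exact rpow_sub_rpow_le_rpow_sub (by positivity) (by gcongr)
      (div_nonneg (by linarith) hγ0.le) hθ
  calc (a ^ (γ - 1) - b ^ (γ - 1)) * (a - b)
      ≤ (a ^ γ - b ^ γ) ^ ((γ - 1) / γ) * (a - b) := by gcongr
    _ ≤ ((a ^ γ - b ^ γ) * (a - b)) ^ (γ / (γ + 1)) :=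
        rpow_div_mul_le_mul_rpow (by linarith) hγ0 (rpow_sub_le_rpow_sub_rpow hb hba hγ)

theorem stmt1 (ρ ρb γ : ℝ) (hρ : 0 < ρ) (hρb : 0 < ρb) (hγ : 1 < γ) :
    |ρ ^ (γ - 1) - ρb ^ (γ - 1)| * |ρ - ρb| ≤
      ((ρ ^ γ - ρb ^ γ) * (ρ - ρb)) ^ (γ / (γ + 1)) := by
  wlog h : ρb ≤ ρ generalizing ρ ρb
  · rw [abs_sub_comm, abs_sub_comm ρ,
      show (ρ ^ γ - ρb ^ γ) * (ρ - ρb) = (ρb ^ γ - ρ ^ γ) * (ρb - ρ) by ring]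
    exact this ρb ρ hρb hρ (le_of_not_ge h)
  rw [abs_of_nonneg (sub_nonneg.2 (Real.rpow_le_rpow hρb.le h (by linarith))),
    abs_of_nonneg (sub_nonneg.2 h)]
  exact rpow_sub_mul_sub_le_of_le hρb.le h hγ.le
end

section
/- For all ρ, ρ̄ ≥ 0 and γ ≥ 1, (ρ^γ - ρ̄^γ)(ρ - ρ̄) ≤ ((γ+1)/2) · |ρ^{(γ+1)/2} - ρ̄^{(γ+1)/2}|². -/
lemma rpow_sq_aux (x : ℝ) (hx : 0 ≤ x) (c : ℝ) : (x ^ c) ^ 2 = x ^ (2 * c) := by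
  rw [← Real.rpow_natCast (x ^ c) 2, ← Real.rpow_mul hx]
  norm_num [mul_comm]

theorem stmt5 (ρ ρb γ : ℝ) (hρ : 0 ≤ ρ) (hρb : 0 ≤ ρb) (hγ : 1 ≤ γ) :
    (ρ ^ γ - ρb ^ γ) * (ρ - ρb) ≤
      (γ + 1) / 2 * |ρ ^ ((γ + 1) / 2) - ρb ^ ((γ + 1) / 2)| ^ 2 := by
  have hγ0 : (0:ℝ) ≤ γ := by linarith
  set A := ρ ^ ((γ + 1) / 2) with hA
  set B := ρb ^ ((γ + 1) / 2) with hB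
  set u := ρ ^ (γ / 2) * ρb ^ ((1:ℝ) / 2) with hu
  set v := ρ ^ ((1:ℝ) / 2) * ρb ^ (γ / 2) with hv
  have f1 : ρ ^ γ * ρ = A ^ 2 := by
    rw [hA, rpow_sq_aux ρ hρ, show 2 * ((γ + 1) / 2) = γ + 1 by ring,
      Real.rpow_add_of_nonneg hρ hγ0 zero_le_one, Real.rpow_one]
  have f2 : ρb ^ γ * ρb = B ^ 2 := by
    rw [hB, rpow_sq_aux ρb hρb, show 2 * ((γ + 1) / 2) = γ + 1 by ring,
      Real.rpow_add_of_nonneg hρb hγ0 zero_le_one, Real.rpow_one]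
  have f3 : ρ ^ γ * ρb = u ^ 2 := by
    rw [hu, mul_pow, rpow_sq_aux ρ hρ, rpow_sq_aux ρb hρb,
      show 2 * (γ / 2) = γ by ring, show 2 * ((1:ℝ) / 2) = 1 by ring, Real.rpow_one]
  have f4 : ρ * ρb ^ γ = v ^ 2 := by
    rw [hv, mul_pow, rpow_sq_aux ρ hρ, rpow_sq_aux ρb hρb,
      show 2 * (γ / 2) = γ by ring, show 2 * ((1:ℝ) / 2) = 1 by ring, Real.rpow_one]
  have f5 : u * v = A * B := by
    rw [hu, hv, hA, hB, show (γ + 1) / 2 = γ / 2 + 1 / 2 by ring,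
      Real.rpow_add_of_nonneg hρ (by linarith) (by norm_num),
      Real.rpow_add_of_nonneg hρb (by linarith) (by norm_num)]
    ring
  rw [sq_abs]
  nlinarith [sq_nonneg (u - v), f1, f2, f3, f4, f5,
    mul_nonneg (show (0:ℝ) ≤ (γ + 1) / 2 - 1 by linarith) (sq_nonneg (A - B))]
end

section
/- Let ρ > ρ̄ ≥ 0, γ > 1, u = ρ^{γ-1}, ū = ρ̄^{γ-1}, and a ∈ [0,1]. Then ρ^γ - ρ̄^γ ≥ (u - ū)^{aγ/(γ-1)} · (ρ - ρ̄)^{(1-a)γ}. -/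
/-!
Both factors on the right are bounded by `ρ ^ γ - ρb ^ γ`: superadditivity of `t ↦ t ^ p` for
`p ≥ 1` gives `(x - y) ^ p ≤ x ^ p - y ^ p`, applied once with `p = γ` to `ρ, ρb` and once with
`p = γ / (γ - 1)` to `u = ρ ^ (γ - 1), ū = ρb ^ (γ - 1)`. The claim is then the weighted
geometric mean of these two bounds with weights `a` and `1 - a`.
-/

open Real

lemma Real.sub_rpow_le_rpow_sub_rpow {x y p : ℝ} (hy : 0 ≤ y) (hyx : y ≤ x) (hp : 1 ≤ p) :
    (x - y) ^ p ≤ x ^ p - y ^ p := by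
  have h := Real.add_rpow_le_rpow_add (sub_nonneg.mpr hyx) hy hp
  rw [sub_add_cancel] at h
  linarith

lemma Real.rpow_mul_rpow_one_sub_le {A B C a : ℝ} (hA : 0 ≤ A) (hB : 0 ≤ B) (hAC : A ≤ C)
    (hBC : B ≤ C) (ha₀ : 0 ≤ a) (ha₁ : a ≤ 1) :
    A ^ a * B ^ (1 - a) ≤ C := by
  have hC : 0 ≤ C := hA.trans hAC
  calc A ^ a * B ^ (1 - a)
      ≤ C ^ a * C ^ (1 - a) := by gcongr
    _ = C := by rw [← rpow_add' hC (by norm_num), add_sub_cancel, rpow_one]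

theorem stmt9 (ρ ρb γ a : ℝ) (hρb : 0 ≤ ρb) (hρ : ρb < ρ) (hγ : 1 < γ)
    (ha : a ∈ Set.Icc (0 : ℝ) 1) :
    ρ ^ γ - ρb ^ γ ≥
      (ρ ^ (γ - 1) - ρb ^ (γ - 1)) ^ (a * γ / (γ - 1)) * (ρ - ρb) ^ ((1 - a) * γ) := by
  obtain ⟨ha₀, ha₁⟩ := ha
  have hγ₁ : 0 < γ - 1 := by linarith
  have hp : 1 ≤ γ / (γ - 1) := by rw [le_div_iff₀ hγ₁]; linarith
  have hpow : ∀ r : ℝ, 0 ≤ r → (r ^ (γ - 1)) ^ (γ / (γ - 1)) = r ^ γ := fun r hr => by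
    rw [← rpow_mul hr, mul_div_cancel₀ _ hγ₁.ne']
  have hu : ρb ^ (γ - 1) ≤ ρ ^ (γ - 1) := rpow_le_rpow hρb hρ.le hγ₁.le
  have hbound_u : (ρ ^ (γ - 1) - ρb ^ (γ - 1)) ^ (γ / (γ - 1)) ≤ ρ ^ γ - ρb ^ γ := by
    simpa only [hpow ρ (hρb.trans hρ.le), hpow ρb hρb] using
      sub_rpow_le_rpow_sub_rpow (rpow_nonneg hρb _) hu hp
  have hbound_ρ : (ρ - ρb) ^ γ ≤ ρ ^ γ - ρb ^ γ := sub_rpow_le_rpow_sub_rpow hρb hρ.le hγ.le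
  rw [ge_iff_le, mul_comm a, mul_div_right_comm, rpow_mul (sub_nonneg.mpr hu), mul_comm _ γ,
    rpow_mul (sub_nonneg.mpr hρ.le)]
  exact rpow_mul_rpow_one_sub_le (rpow_nonneg (sub_nonneg.mpr hu) _)
    (rpow_nonneg (sub_nonneg.mpr hρ.le) _) hbound_u hbound_ρ ha₀ ha₁
end

section
/- Let N ∈ ℕ, Δt > 0, h : Fin N → ℝ positive cell widths, and a : Fin N → ℝ nonnegative with Δt ≤ min_i h_i / a_i (interpreting h_i/a_i = ∞ if a_i = 0). If ρ : Fin N → ℝ is nonnegative and for each i, F_{i+1/2} = c⁺_{i+1/2} ρ_i - c⁻_{i+1/2} ρ_{i+1} (indices mod N) with c⁺, c⁻ ≥ 0 and a_i ≥ c⁻_{i-1/2} + c⁺_{i+1/2}, then ρ_i - (Δt/h_i)(F_{i+1/2} - F_{i-1/2}) ≥ 0 for all i. -/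
/-! With `λ = Δt / hᵢ` and `s = c⁻_{i-1/2} + c⁺_{i+1/2}`, the updated value is
`(1 - λ s) ρᵢ + λ (c⁻_{i+1/2} ρ_{i+1} + c⁺_{i-1/2} ρ_{i-1})`, and the CFL condition gives
`λ s ≤ 1`: a nonnegative combination of nonnegative densities. -/

lemma upwindFlux_sub_eq {ι : Type*} [AddGroupWithOne ι] (ρ cp cm F : ι → ℝ)
    (hF : ∀ i, F i = cp i * ρ i - cm i * ρ (i + 1)) (i : ι) :
    F i - F (i - 1) =
      (cm (i - 1) + cp i) * ρ i - (cm i * ρ (i + 1) + cp (i - 1) * ρ (i - 1)) := by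
  rw [hF, hF, sub_add_cancel]
  ring

lemma div_mul_le_one_of_mul_le {Δt h s a : ℝ} (hΔt : 0 ≤ Δt) (hh : 0 < h) (hsa : s ≤ a)
    (hcfl : Δt * a ≤ h) : Δt / h * s ≤ 1 := by
  rw [div_mul_eq_mul_div, div_le_one hh]
  exact (mul_le_mul_of_nonneg_left hsa hΔt).trans hcfl

lemma sub_mul_sub_nonneg {r s ρ g : ℝ} (hr : 0 ≤ r) (hrs : r * s ≤ 1) (hρ : 0 ≤ ρ)
    (hg : 0 ≤ g) : 0 ≤ ρ - r * (s * ρ - g) := by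
  have hcomb : ρ - r * (s * ρ - g) = (1 - r * s) * ρ + r * g := by ring
  rw [hcomb]
  exact add_nonneg (mul_nonneg (sub_nonneg.mpr hrs) hρ) (mul_nonneg hr hg)

theorem stmt14_general (N : ℕ) (Δt : ℝ) (hΔt : 0 < Δt)
    (h a ρ cp cm : ZMod N → ℝ)
    (hh : ∀ i, 0 < h i) (hρ : ∀ i, 0 ≤ ρ i)
    (hcp : ∀ i, 0 ≤ cp i) (hcm : ∀ i, 0 ≤ cm i)
    (hcfl : ∀ i, Δt * a i ≤ h i)
    (hac : ∀ i, cm (i - 1) + cp i ≤ a i)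
    (F : ZMod N → ℝ) (hF : ∀ i, F i = cp i * ρ i - cm i * ρ (i + 1)) :
    ∀ i, 0 ≤ ρ i - Δt / h i * (F i - F (i - 1)) := by
  intro i
  rw [upwindFlux_sub_eq ρ cp cm F hF i]
  refine sub_mul_sub_nonneg (div_nonneg hΔt.le (hh i).le)
    (div_mul_le_one_of_mul_le hΔt.le (hh i) (hac i) (hcfl i)) (hρ i)
    (add_nonneg (mul_nonneg (hcm i) (hρ _)) (mul_nonneg (hcp _) (hρ _)))

theorem stmt14 (N : ℕ) [NeZero N] (Δt : ℝ) (hΔt : 0 < Δt)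
    (h a ρ cp cm : ZMod N → ℝ)
    (hh : ∀ i, 0 < h i) (ha : ∀ i, 0 ≤ a i) (hρ : ∀ i, 0 ≤ ρ i)
    (hcp : ∀ i, 0 ≤ cp i) (hcm : ∀ i, 0 ≤ cm i)
    (hcfl : ∀ i, Δt * a i ≤ h i)
    (hac : ∀ i, cm (i - 1) + cp i ≤ a i)
    (F : ZMod N → ℝ) (hF : ∀ i, F i = cp i * ρ i - cm i * ρ (i + 1)) :
    ∀ i, 0 ≤ ρ i - Δt / h i * (F i - F (i - 1)) :=
  stmt14_general N Δt hΔt h a ρ cp cm hh hρ hcp hcm hcfl hac F hF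
end

section
/- Let A ∈ ℝ^{N×N} be a matrix with nonpositive diagonal entries, nonnegative off-diagonal entries, and each row summing to zero, and let Δt > 0. Then for any vector r ∈ ℝ^N with r ≥ 0 componentwise, any solution x of (I - Δt A) x = r satisfies x ≥ 0 componentwise. -/
open Matrix

variable {ι R : Type*} [Fintype ι] [CommRing R] [LinearOrder R] [IsStrictOrderedRing R]

/-- Zero row sums let `(A *ᵥ x) i` be rewritten as `∑ j, A i j * (x j - x i)`, whose terms are
nonnegative at a minimum of `x`. -/
theorem Matrix.mulVec_apply_nonneg_of_forall_le {A : Matrix ι ι R}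
    (hoff : ∀ i j, i ≠ j → 0 ≤ A i j) (hrow : ∀ i, ∑ j, A i j = 0)
    {x : ι → R} {i : ι} (hmin : ∀ j, x i ≤ x j) : 0 ≤ (A *ᵥ x) i := by
  have hshift : (A *ᵥ x) i = ∑ j, A i j * (x j - x i) := by
    simp only [mulVec, dotProduct, mul_sub, Finset.sum_sub_distrib, ← Finset.sum_mul, hrow,
      zero_mul, sub_zero]
  rw [hshift]
  refine Finset.sum_nonneg fun j _ => ?_
  rcases eq_or_ne i j with rfl | hij
  · simp
  · exact mul_nonneg (hoff i j hij) (sub_nonneg.mpr (hmin j))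

/-- Inverse positivity of `1 - t • A`: evaluate at a minimal coordinate of `x`. -/
theorem Matrix.nonneg_of_one_sub_smul_mulVec_nonneg [DecidableEq ι] {A : Matrix ι ι R}
    (hoff : ∀ i j, i ≠ j → 0 ≤ A i j) (hrow : ∀ i, ∑ j, A i j = 0)
    {t : R} (ht : 0 ≤ t) {x : ι → R} (hx : 0 ≤ (1 - t • A) *ᵥ x) : 0 ≤ x := by
  intro i
  have : Nonempty ι := ⟨i⟩
  obtain ⟨i₀, hi₀⟩ := Finite.exists_min x
  have hAx : 0 ≤ (A *ᵥ x) i₀ := mulVec_apply_nonneg_of_forall_le hoff hrow hi₀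
  have hx₀ : 0 ≤ x i₀ - t * (A *ᵥ x) i₀ := by
    simpa [sub_mulVec, smul_mulVec] using hx i₀
  calc (0 : R) ≤ x i₀ := by nlinarith [mul_nonneg ht hAx]
    _ ≤ x i := hi₀ i

theorem stmt15_general (N : ℕ) (A : Matrix (Fin N) (Fin N) ℝ) (Δt : ℝ) (hΔt : 0 < Δt)
    (hoff : ∀ i j, i ≠ j → 0 ≤ A i j)
    (hrow : ∀ i, ∑ j, A i j = 0)
    (r x : Fin N → ℝ) (hr : ∀ i, 0 ≤ r i)
    (hx : (1 - Δt • A).mulVec x = r) :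
    ∀ i, 0 ≤ x i :=
  Matrix.nonneg_of_one_sub_smul_mulVec_nonneg hoff hrow hΔt.le (hx ▸ hr)

theorem stmt15 (N : ℕ) (A : Matrix (Fin N) (Fin N) ℝ) (Δt : ℝ) (hΔt : 0 < Δt)
    (hdiag : ∀ i, A i i ≤ 0) (hoff : ∀ i j, i ≠ j → 0 ≤ A i j)
    (hrow : ∀ i, ∑ j, A i j = 0)
    (r x : Fin N → ℝ) (hr : ∀ i, 0 ≤ r i)
    (hx : (1 - Δt • A).mulVec x = r) :
    ∀ i, 0 ≤ x i :=
  stmt15_general N A Δt hΔt hoff hrow r x hr hx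
end
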